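/- For all real x, cosh(x)·I₀(x) = Σ_{n=0}^∞ ((1/4)_n (3/4)_n) / ((1/2)_n (1/2)_n) · (x²)^n / (n!)², where I₀ is the modified Bessel function of order 0. -/

import Mathlib

/-!
Multiply the Taylor series of `cosh` and `I₀` as a Cauchy product. The coefficient of `x ^ (2 * n)`
is `∑_{i + j = n} 1 / ((2i)! 4^j (j!)²)`, which the identity
`∑_{i + j = n} 4^i C(2n, 2i) C(2j, j) = C(4n, 2n)` evaluates to `(4n)! / (4^n ((2n)!)³)`.
Legendre duplication `(2a)_{2n} = 4^n (a)_n (a + 1/2)_n` at `a = 1/2` and `a = 1/4` rewrites this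
as the Pochhammer quotient divided by `(n!)²`.
-/

/-- Modified Bessel function of the first kind of order 0, via its Taylor series. -/
noncomputable def besselI0 (x : ℝ) : ℝ :=
  ∑' n : ℕ, (x / 2) ^ (2 * n) / (Nat.factorial n : ℝ) ^ 2

/-- Pochhammer (rising factorial) symbol for real argument. -/
noncomputable def poch (a : ℝ) (n : ℕ) : ℝ := ∏ i ∈ Finset.range n, (a + i)

open Finset Polynomial
open scoped Nat

lemma poch_succ (a : ℝ) (n : ℕ) : poch a (n + 1) = poch a n * (a + n) :=
  prod_range_succ _ _

lemma poch_one (n : ℕ) : poch 1 n = n ! := by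
  induction n with
  | zero => simp [poch]
  | succ n ih => rw [poch_succ, ih, Nat.factorial_succ]; push_cast; ring

lemma poch_two_mul (a : ℝ) (n : ℕ) :
    poch (2 * a) (2 * n) = 4 ^ n * poch a n * poch (a + 1 / 2) n := by
  induction n with
  | zero => simp [poch]
  | succ n ih =>
    rw [show 2 * (n + 1) = 2 * n + 1 + 1 by ring, poch_succ, poch_succ, ih, poch_succ, poch_succ]
    push_cast; ring

lemma poch_half_mul (n : ℕ) : 4 ^ n * n ! * poch (1 / 2) n = (2 * n)! := by
  have h := poch_two_mul (1 / 2) n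
  norm_num [poch_one] at h
  rw [h]; ring

lemma poch_quarter_mul_poch_three_quarters (n : ℕ) :
    64 ^ n * (2 * n)! * (poch (1 / 4) n * poch (3 / 4) n) = (4 * n)! := by
  have h := poch_two_mul (1 / 4) n
  have h' := poch_half_mul (2 * n)
  norm_num at h
  rw [show 2 * (2 * n) = 4 * n by ring, h] at h'
  rw [← h', pow_mul, show (64 : ℝ) = 4 ^ 2 * 4 by norm_num, mul_pow]; ring

/-- Central coefficient of `((X + 1) ^ 2) ^ m = (X * (X + 2) + 1) ^ m`, expanded binomially
in `X * (X + 2)`. -/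
lemma choose_two_mul_self_eq_sum (m : ℕ) :
    (2 * m).choose m = ∑ t ∈ range (m + 1), m.choose t * t.choose (m - t) * 2 ^ (t - (m - t)) := by
  have hcoeff : ((X + 1 : ℕ[X]) ^ (2 * m)).coeff m = (2 * m).choose m := by
    rw [coeff_X_add_one_pow, Nat.cast_id]
  rw [← hcoeff, pow_mul, show (X + 1 : ℕ[X]) ^ 2 = X * (X + C 2) + 1 by rw [C_ofNat]; ring, add_pow,
    finsetSum_coeff]
  refine sum_congr rfl fun t ht => ?_
  obtain ⟨s, rfl⟩ := Nat.exists_eq_add_of_le (Nat.lt_succ_iff.mp (mem_range.mp ht))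
  rw [one_pow, mul_one, mul_pow, ← C_eq_natCast, mul_assoc, add_comm t s, coeff_X_pow_mul',
    if_pos le_add_self, Nat.add_sub_cancel, coeff_mul_C, coeff_X_add_C_pow]
  simp only [Nat.cast_id]
  ring

lemma sum_antidiagonal_four_pow_mul_choose_mul_centralBinom (n : ℕ) :
    ∑ p ∈ antidiagonal n, 4 ^ p.1 * (2 * n).choose (2 * p.1) * p.2.centralBinom
      = (4 * n).choose (2 * n) := by
  rw [show 4 * n = 2 * (2 * n) by ring, choose_two_mul_self_eq_sum,
    show 2 * n + 1 = n + (n + 1) by ring, sum_range_add, Nat.sum_antidiagonal_eq_sum_range_succ_mk]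
  have hlow : ∑ t ∈ range n, (2 * n).choose t * t.choose (2 * n - t) * 2 ^ (t - (2 * n - t)) = 0 :=
    sum_eq_zero fun t ht => by
      rw [Nat.choose_eq_zero_of_lt (n := t) (by have := mem_range.mp ht; omega)]; ring
  rw [hlow, zero_add]
  refine sum_congr rfl fun i hi => ?_
  have hin : i ≤ n := Nat.lt_succ_iff.mp (mem_range.mp hi)
  rw [show 2 * n - (n + i) = n - i by omega, show n + i - (n - i) = 2 * i by omega, pow_mul,
    Nat.choose_symm_of_eq_add (show n + i = (n - i) + 2 * i by omega), Nat.choose_mul (by omega),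
    show 2 * n - 2 * i = 2 * (n - i) by omega, show n + i - 2 * i = n - i by omega,
    Nat.centralBinom_eq_two_mul_choose]
  ring

lemma sum_antidiagonal_inv_factorial (n : ℕ) :
    ∑ p ∈ antidiagonal n, 1 / ((2 * p.1)! * 4 ^ p.2 * (p.2 ! : ℝ) ^ 2)
      = (4 * n)! / (4 ^ n * ((2 * n)! : ℝ) ^ 3) := by
  have hterm : ∀ p ∈ antidiagonal n, 1 / ((2 * p.1)! * 4 ^ p.2 * (p.2 ! : ℝ) ^ 2)
      = (4 ^ p.1 * (2 * n).choose (2 * p.1) * p.2.centralBinom : ℕ) / (4 ^ n * (2 * n)!) := by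
    rintro ⟨i, j⟩ hij
    obtain rfl : i + j = n := mem_antidiagonal.mp hij
    rw [Nat.centralBinom_eq_two_mul_choose]
    push_cast
    rw [Nat.cast_choose ℝ (by omega), Nat.cast_choose ℝ (by omega),
      show 2 * (i + j) - 2 * i = 2 * j by omega, show 2 * j - j = j by omega, pow_add]
    field_simp
  rw [sum_congr rfl hterm, ← sum_div, ← Nat.cast_sum,
    sum_antidiagonal_four_pow_mul_choose_mul_centralBinom, Nat.cast_choose ℝ (by omega),
    show 4 * n - 2 * n = 2 * n by omega]
  field_simp

lemma poch_ratio_div_factorial_sq (n : ℕ) :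
    poch (1 / 4) n * poch (3 / 4) n / (poch (1 / 2) n * poch (1 / 2) n) / (n ! : ℝ) ^ 2
      = (4 * n)! / (4 ^ n * ((2 * n)! : ℝ) ^ 3) := by
  rw [← poch_quarter_mul_poch_three_quarters, ← poch_half_mul,
    show (64 : ℝ) ^ n = 4 ^ n * 4 ^ n * 4 ^ n by rw [← mul_pow, ← mul_pow]; norm_num]
  have : poch (1 / 2) n ≠ 0 := (prod_pos fun i _ => by positivity).ne'
  field_simp

lemma summable_norm_cosh_series (x : ℝ) :
    Summable fun n => ‖x ^ (2 * n) / ((2 * n)! : ℝ)‖ :=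
  (Real.hasSum_cosh |x|).summable.congr fun n => by
    rw [norm_div, norm_pow, Real.norm_eq_abs, Real.norm_natCast]

lemma summable_norm_besselI0_series (x : ℝ) :
    Summable fun n => ‖(x / 2) ^ (2 * n) / (n ! : ℝ) ^ 2‖ := by
  refine .of_nonneg_of_le (fun _ => norm_nonneg _) (fun n => ?_)
    (Real.summable_pow_div_factorial ((x / 2) ^ 2))
  rw [pow_mul, Real.norm_of_nonneg (by positivity)]
  gcongr
  exact_mod_cast Nat.le_self_pow two_ne_zero _

theorem cosh_mul_besselI0_hypergeom (x : ℝ) :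
    Real.cosh x * besselI0 x =
      ∑' n : ℕ, (poch (1/4) n * poch (3/4) n) / (poch (1/2) n * poch (1/2) n)
        * (x ^ 2) ^ n / (Nat.factorial n : ℝ) ^ 2 := by
  rw [Real.cosh_eq_tsum, besselI0, tsum_mul_tsum_eq_tsum_sum_antidiagonal_of_summable_norm
    (summable_norm_cosh_series x) (summable_norm_besselI0_series x)]
  refine tsum_congr fun n => ?_
  have hterm : ∀ p ∈ antidiagonal n, x ^ (2 * p.1) / (2 * p.1)! * ((x / 2) ^ (2 * p.2) / p.2 ! ^ 2)
      = x ^ (2 * n) * (1 / ((2 * p.1)! * 4 ^ p.2 * (p.2 ! : ℝ) ^ 2)) := by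
    rintro ⟨i, j⟩ hij
    obtain rfl : i + j = n := mem_antidiagonal.mp hij
    dsimp only
    rw [mul_add, pow_add, div_pow, pow_mul (2 : ℝ)]
    ring
  rw [sum_congr rfl hterm, ← mul_sum, sum_antidiagonal_inv_factorial,
    ← poch_ratio_div_factorial_sq, ← pow_mul]
  ring
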